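/- Let Y = (2+√13)/3 and let λ be the real number with Y^λ = (7-√13)/6. Then the set { Y^{2m+nλ} : m, n ∈ ℤ } is dense in the positive reals ℝ₊. -/
import Mathlib

open Real

noncomputable def s13 : ℝ := Real.sqrt 13

lemma s13_sq : s13 ^ 2 = 13 := Real.sq_sqrt (by norm_num)
lemma s13_gt : (3:ℝ) < s13 := by
  rw [s13, show (3:ℝ) = √9 by rw [show (9:ℝ) = 3^2 by norm_num, Real.sqrt_sq]; norm_num]
  exact Real.sqrt_lt_sqrt (by norm_num) (by norm_num)
lemma s13_lt : s13 < 4 := by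
  rw [s13, Real.sqrt_lt' (by norm_num)]; norm_num

lemma thirteen_not_square : ∀ n : ℤ, (13:ℤ) ≠ n * n := by
  intro n h
  rcases le_or_gt 0 n with h0 | h0
  · rcases le_or_gt n 3 with h1 | h1 <;> nlinarith
  · rcases le_or_gt n (-4) with h1 | h1 <;> nlinarith

noncomputable def fR : (ℤ√13) →+* ℝ := Zsqrtd.toReal (by norm_num)

lemma fR_inj : Function.Injective fR := Zsqrtd.toReal_injective _ thirteen_not_square

lemma fR_apply (a : ℤ√13) : fR a = a.re + a.im * s13 := by
  simp [fR, s13, Zsqrtd.toReal_apply]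

def gZ : (ℤ√13) →+* ZMod 3 := Zsqrtd.lift ⟨2, by decide⟩

lemma gZ_apply (a : ℤ√13) : gZ a = (a.re : ZMod 3) + (a.im : ZMod 3) * 2 := by
  simp [gZ, Zsqrtd.lift_apply_apply]

/-- Core impossibility: `(2+√13)^k * 2^n = 3^k * (c+√13)^n` is impossible for `k ≥ 1`,
`c = 3` or `c = -3`. -/
lemma core (k n : ℕ) (hk : 0 < k) (c : ℤ) (hc : c = 3 ∨ c = -3)
    (h : (2 + s13) ^ k * 2 ^ n = 3 ^ k * ((c : ℝ) + s13) ^ n) : False := by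
  set u : ℤ√13 := ⟨2, 1⟩ with hu
  set t : ℤ√13 := ⟨c, 1⟩ with ht
  have hfu : fR u = 2 + s13 := by rw [fR_apply]; simp [hu]
  have hft : fR t = (c : ℝ) + s13 := by rw [fR_apply]; simp [ht]
  have hf2 : fR 2 = 2 := by rw [map_ofNat]
  have hf3 : fR 3 = 3 := by rw [map_ofNat]
  have heq : fR (u ^ k * 2 ^ n) = fR (3 ^ k * t ^ n) := by
    rw [map_mul, map_mul, map_pow, map_pow, map_pow, map_pow, hfu, hft, hf2, hf3, h]
  have hZ : u ^ k * 2 ^ n = 3 ^ k * t ^ n := fR_inj heq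
  have hg : gZ u ^ k * (gZ 2) ^ n = (gZ 3) ^ k * gZ t ^ n := by
    have := congrArg gZ hZ
    simpa [map_mul, map_pow] using this
  have hgu : gZ u = 1 := by rw [gZ_apply]; simp [hu]; decide
  have hg2 : gZ 2 = 2 := by rw [map_ofNat]
  have hg3 : gZ 3 = 0 := by rw [map_ofNat]; decide
  have hgt : gZ t = 2 := by
    rw [gZ_apply]
    rcases hc with rfl | rfl <;> simp [ht] <;> decide
  rw [hgu, hg2, hg3, hgt, one_pow, one_mul, zero_pow hk.ne', zero_mul] at hg
  exact pow_ne_zero n (by decide : (2 : ZMod 3) ≠ 0) hg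

/-- If `Y^k = ε^j` with `Y = (2+√13)/3`, `ε = (3+√13)/2`, then `k = j = 0`. -/
lemma lemA : ∀ k j : ℤ, ((2 + s13)/3) ^ k = ((3 + s13)/2) ^ j → k = 0 ∧ j = 0 := by
  have hs3 := s13_gt
  have hs4 := s13_lt
  have hssq := s13_sq
  have hY : (1:ℝ) < (2 + s13)/3 := by nlinarith
  have hE : (1:ℝ) < (3 + s13)/2 := by nlinarith
  have hY0 : (0:ℝ) < (2 + s13)/3 := by linarith
  have hE0 : (0:ℝ) < (3 + s13)/2 := by linarith
  have hEinv : ((3 + s13)/2)⁻¹ = (s13 - 3)/2 := by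
    rw [inv_eq_iff_eq_inv, eq_comm, inv_eq_iff_eq_inv, eq_comm]
    · field_simp
      nlinarith
  -- core applied for positive k
  have key : ∀ k : ℤ, 0 < k → ∀ j : ℤ, ((2 + s13)/3) ^ k ≠ ((3 + s13)/2) ^ j := by
    intro k hk j h
    rcases le_or_gt 0 j with hj | hj
    · -- j ≥ 0
      lift k to ℕ using hk.le with k' hk'
      lift j to ℕ using hj with j' hj'
      rw [zpow_natCast, zpow_natCast, div_pow, div_pow, div_eq_div_iff (by positivity) (by positivity)] at h
      refine core k' j' (by exact_mod_cast hk) 3 (Or.inl rfl) ?_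
      push_cast
      linear_combination h
    · -- j < 0
      have hj' : (0:ℤ) ≤ -j := by omega
      lift k to ℕ using hk.le with k' hk'
      have h2 : ((2 + s13)/3) ^ (k' : ℤ) = (((3 + s13)/2)⁻¹) ^ (-j) := by
        rw [inv_zpow, ← zpow_neg, neg_neg]; exact h
      rw [hEinv] at h2
      set n : ℕ := (-j).toNat with hn
      have hn' : ((n : ℤ)) = -j := Int.toNat_of_nonneg hj'
      rw [← hn', zpow_natCast, zpow_natCast, div_pow, div_pow,
        div_eq_div_iff (by positivity) (by positivity)] at h2
      refine core k' n (by exact_mod_cast hk) (-3) (Or.inr rfl) ?_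
      push_cast
      linear_combination h2
  intro k j h
  rcases lt_trichotomy k 0 with hk | hk | hk
  · exfalso
    refine key (-k) (by omega) (-j) ?_
    rw [zpow_neg, zpow_neg, h]
  · subst hk
    rw [zpow_zero, eq_comm] at h
    refine ⟨rfl, ?_⟩
    have := congrArg Real.log h
    rw [Real.log_zpow, Real.log_one] at this
    have hlog : Real.log ((3 + s13)/2) ≠ 0 := ne_of_gt (Real.log_pos hE)
    have : (j:ℝ) = 0 := by
      rcases mul_eq_zero.mp this with h' | h'
      · exact h'
      · exact absurd h' hlog
    exact_mod_cast this
  · exact absurd h (key k hk j)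

/-- If `Y^m = Z^n` with `Y = (2+√13)/3`, `Z = (7-√13)/6`, then `m = n = 0`. -/
lemma lemB : ∀ m n : ℤ, ((2 + s13)/3) ^ m = ((7 - s13)/6) ^ n → m = 0 ∧ n = 0 := by
  have hs3 := s13_gt
  have hs4 := s13_lt
  have hssq := s13_sq
  intro m n h
  have hY0 : ((2 + s13)/3) ≠ 0 := by positivity
  have hE0 : ((3 + s13)/2) ≠ 0 := by positivity
  have hEinv : ((3 + s13)/2)⁻¹ = (s13 - 3)/2 := by
    rw [inv_eq_iff_eq_inv, eq_comm, inv_eq_iff_eq_inv, eq_comm]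
    field_simp
    nlinarith
  have hZ : (7 - s13)/6 = ((2 + s13)/3) * ((3 + s13)/2)⁻¹ := by
    rw [hEinv, div_mul_div_comm, div_eq_div_iff (by norm_num) (by norm_num)]
    linear_combination (-6 : ℝ) * hssq
  rw [hZ, mul_zpow, inv_zpow'] at h
  have h3 : ((2 + s13)/3) ^ (m - n) = ((3 + s13)/2) ^ (-n) := by
    rw [zpow_sub₀ hY0, h, mul_comm, mul_div_assoc, div_self (zpow_ne_zero _ hY0), mul_one]
  obtain ⟨h4, h5⟩ := lemA _ _ h3
  omega

/-- With `Y = (2+√13)/3` and `λ` the real number with `Y^λ = (7-√13)/6` (that is,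
`λ = log((7-√13)/6)/log Y`), the set `{ Y^(2m+nλ) : m, n ∈ ℤ }` is dense in `ℝ₊`. -/
theorem dense_powers_in_Rpos :
    ∀ x ∈ Set.Ioi (0 : ℝ),
      x ∈ closure {y : ℝ | ∃ m n : ℤ,
        y = ((2 + Real.sqrt 13) / 3) ^
          ((2 * m + n * (Real.log ((7 - Real.sqrt 13) / 6) /
              Real.log ((2 + Real.sqrt 13) / 3))) : ℝ)} := by
  intro x hx
  have hs3 : (3:ℝ) < Real.sqrt 13 := s13_gt
  have hs4 : Real.sqrt 13 < 4 := s13_lt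
  set L1 := Real.log ((2 + Real.sqrt 13) / 3) with hL1def
  set L2 := Real.log ((7 - Real.sqrt 13) / 6) with hL2def
  have hYpos : (0:ℝ) < (2 + Real.sqrt 13) / 3 := by linarith
  have hY1 : (1:ℝ) < (2 + Real.sqrt 13) / 3 := by linarith
  have hZpos : (0:ℝ) < (7 - Real.sqrt 13) / 6 := by linarith
  have hZ1 : (7 - Real.sqrt 13) / 6 < 1 := by linarith
  have hL1 : 0 < L1 := Real.log_pos hY1
  have hL2 : L2 < 0 := Real.log_neg hZpos hZ1
  set H : AddSubgroup ℝ := AddSubgroup.closure {2 * L1, L2} with hH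
  rcases H.dense_or_cyclic with hd | ⟨a, ha⟩
  · have hx' : Real.log x ∈ closure (H : Set ℝ) := hd _
    have hmaps : Set.MapsTo Real.exp (H : Set ℝ) {y : ℝ | ∃ m n : ℤ,
        y = ((2 + Real.sqrt 13) / 3) ^ ((2 * m + n * (L2 / L1)) : ℝ)} := by
      intro t ht
      rw [SetLike.mem_coe, hH, AddSubgroup.mem_closure_pair] at ht
      obtain ⟨m, n, rfl⟩ := ht
      refine ⟨m, n, ?_⟩
      rw [Real.rpow_def_of_pos hYpos]
      congr 1
      rw [zsmul_eq_mul, zsmul_eq_mul]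
      field_simp
      ring
    have := map_mem_closure Real.continuous_exp hx' hmaps
    rwa [Real.exp_log (Set.mem_Ioi.mp hx)] at this
  · exfalso
    have h1 : 2 * L1 ∈ H := AddSubgroup.subset_closure (by simp)
    have h2 : L2 ∈ H := AddSubgroup.subset_closure (by simp)
    rw [ha, AddSubgroup.mem_closure_singleton] at h1 h2
    obtain ⟨p, hp⟩ := h1
    obtain ⟨q, hq⟩ := h2
    rw [zsmul_eq_mul] at hp hq
    have hrel : ((2 * q : ℤ) : ℝ) * L1 = (p : ℝ) * L2 := by
      push_cast
      linear_combination (p : ℝ) * hq - (q : ℝ) * hp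
    have hlog : Real.log (((2 + Real.sqrt 13) / 3) ^ (2 * q : ℤ)) =
        Real.log (((7 - Real.sqrt 13) / 6) ^ (p : ℤ)) := by
      rw [Real.log_zpow, Real.log_zpow]
      exact_mod_cast hrel
    have heq : ((2 + Real.sqrt 13) / 3) ^ (2 * q : ℤ) = ((7 - Real.sqrt 13) / 6) ^ (p : ℤ) := by
      rw [← Real.exp_log (zpow_pos hYpos _), ← Real.exp_log (zpow_pos hZpos _), hlog]
    obtain ⟨h3, h4⟩ := lemB (2 * q) p heq
    have hq0 : q = 0 := by omega
    rw [hq0] at hq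
    simp at hq
    exact absurd hq (ne_of_lt hL2).symm
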